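/- Let F : [0,T] × ℝ → ℂ be such that ξ ↦ F(τ,ξ) is Schwartz uniformly in τ and τ ↦ F(τ,ξ) is C¹. Then for any τ_c ∈ (0,T), K > 0, ε > 0, the difference term Q₂ = ∫_{Ω_ε} dz e^{-iξ_c z} ∫ dξ e^{izξ} [F(τ_c + εz/K, ξ) − F(τ_c, ξ)] satisfies, after inserting e^{izξ} = (1+z⁴)^{-1}(1 − ∂_ξ⁴)e^{izξ} · (1+z⁴) and writing the difference as ∫_0^{εz/K} ∂_φ F dφ, the bound |Q₂| ≤ C ε · ∫_ℝ |z|/(1+z⁴) dz · sup over the relevant mixed derivatives of F, hence |Q₂| ≤ C' ε. -/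

import Mathlib

open MeasureTheory Real

lemma aux_smooth_iter (F : ℝ → ℝ → ℂ) (hsm : ContDiff ℝ (⊤ : ℕ∞) (fun p : ℝ × ℝ => F p.1 p.2)) (j : ℕ) :
    ContDiff ℝ (⊤ : ℕ∞) (fun p : ℝ × ℝ => iteratedDeriv j (F p.1) p.2) := by
  induction j with
  | zero => simpa using hsm
  | succ j ih =>
    have h1 : ContDiff ℝ (⊤ : ℕ∞)
        (Function.uncurry (fun (p : ℝ × ℝ) (ξ : ℝ) => iteratedDeriv j (F p.1) ξ)) := by
      have he : (Function.uncurry fun (p : ℝ × ℝ) (ξ : ℝ) => iteratedDeriv j (F p.1) ξ)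
          = (fun p : ℝ × ℝ => iteratedDeriv j (F p.1) p.2)
            ∘ (fun q : (ℝ × ℝ) × ℝ => (q.1.1, q.2)) := rfl
      rw [he]
      exact ih.comp ((contDiff_fst.comp contDiff_fst).prodMk contDiff_snd)
    have h2 : ContDiff ℝ (⊤ : ℕ∞)
        (fun p : ℝ × ℝ => fderiv ℝ (fun ξ => iteratedDeriv j (F p.1) ξ) p.2 1) :=
      (h1.fderiv (g := fun p : ℝ × ℝ => p.2) contDiff_snd (by simp)).clm_apply contDiff_const
    have he2 : (fun p : ℝ × ℝ => iteratedDeriv (j+1) (F p.1) p.2)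
        = fun p : ℝ × ℝ => fderiv ℝ (fun ξ => iteratedDeriv j (F p.1) ξ) p.2 1 := by
      funext p
      rw [iteratedDeriv_succ, ← fderiv_apply_one_eq_deriv]
    rw [he2]
    exact h2

lemma aux_smooth_sderiv (F : ℝ → ℝ → ℂ) (hsm : ContDiff ℝ (⊤ : ℕ∞) (fun p : ℝ × ℝ => F p.1 p.2)) (j : ℕ) :
    ContDiff ℝ (⊤ : ℕ∞) (fun p : ℝ × ℝ => deriv (fun s => iteratedDeriv j (F s) p.2) p.1) := by
  have h1 : ContDiff ℝ (⊤ : ℕ∞)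
      (Function.uncurry (fun (p : ℝ × ℝ) (s : ℝ) => iteratedDeriv j (F s) p.2)) := by
    have he : (Function.uncurry fun (p : ℝ × ℝ) (s : ℝ) => iteratedDeriv j (F s) p.2)
        = (fun p : ℝ × ℝ => iteratedDeriv j (F p.1) p.2)
          ∘ (fun q : (ℝ × ℝ) × ℝ => (q.2, q.1.2)) := rfl
    rw [he]
    exact (aux_smooth_iter F hsm j).comp (contDiff_snd.prodMk (contDiff_snd.comp contDiff_fst))
  have h2 : ContDiff ℝ (⊤ : ℕ∞)
      (fun p : ℝ × ℝ => fderiv ℝ (fun s => iteratedDeriv j (F s) p.2) p.1 1) :=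
    (h1.fderiv (g := fun p : ℝ × ℝ => p.1) contDiff_fst (by simp)).clm_apply contDiff_const
  have he2 : (fun p : ℝ × ℝ => deriv (fun s => iteratedDeriv j (F s) p.2) p.1)
      = fun p : ℝ × ℝ => fderiv ℝ (fun s => iteratedDeriv j (F s) p.2) p.1 1 := by
    funext p
    rw [← fderiv_apply_one_eq_deriv]
  rw [he2]
  exact h2

lemma aux_L1 (F : ℝ → ℝ → ℂ) (hsm : ContDiff ℝ (⊤ : ℕ∞) (fun p : ℝ × ℝ => F p.1 p.2))
    (B : ℝ) (j : ℕ) (τc s : ℝ)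
    (hB : ∀ φ : ℝ, (∫ ξ : ℝ, ‖deriv (fun u : ℝ => iteratedDeriv j (F u) ξ) φ‖) ≤ B)
    (hInt : ∀ φ : ℝ, Integrable (fun ξ : ℝ => deriv (fun u : ℝ => iteratedDeriv j (F u) ξ) φ)) :
    ∫ ξ : ℝ, ‖iteratedDeriv j (F s) ξ - iteratedDeriv j (F τc) ξ‖ ≤ B * |s - τc| := by
  have hB0 : 0 ≤ B := le_trans (integral_nonneg fun _ => norm_nonneg _) (hB 0)
  have hD : Continuous fun p : ℝ × ℝ => deriv (fun u => iteratedDeriv j (F u) p.2) p.1 :=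
    (aux_smooth_sderiv F hsm j).continuous
  have hG : Continuous fun p : ℝ × ℝ => iteratedDeriv j (F p.1) p.2 :=
    (aux_smooth_iter F hsm j).continuous
  have ftc : ∀ ξ : ℝ, iteratedDeriv j (F s) ξ - iteratedDeriv j (F τc) ξ
      = ∫ φ in τc..s, deriv (fun u => iteratedDeriv j (F u) ξ) φ := by
    intro ξ
    rw [intervalIntegral.integral_deriv_eq_sub]
    · intro x _
      exact (((aux_smooth_iter F hsm j).comp
        ((contDiff_id (E := ℝ)).prodMk contDiff_const)).differentiable (by simp)).differentiableAt
    · exact ((hD.comp (continuous_id.prodMk continuous_const)).intervalIntegrable _ _)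
  have hcontdiffξ : Continuous fun ξ : ℝ =>
      iteratedDeriv j (F s) ξ - iteratedDeriv j (F τc) ξ := by
    exact ((hG.comp (continuous_const.prodMk continuous_id)).sub
      (hG.comp (continuous_const.prodMk continuous_id)))
  rw [integral_eq_lintegral_of_nonneg_ae (Filter.Eventually.of_forall fun _ => norm_nonneg _)
    hcontdiffξ.norm.aestronglyMeasurable]
  refine ENNReal.toReal_le_of_le_ofReal (by positivity) ?_
  have step1 : ∀ ξ : ℝ, ENNReal.ofReal ‖iteratedDeriv j (F s) ξ - iteratedDeriv j (F τc) ξ‖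
      ≤ ∫⁻ φ in Set.uIoc τc s, ENNReal.ofReal ‖deriv (fun u => iteratedDeriv j (F u) ξ) φ‖ := by
    intro ξ
    rw [ftc ξ, intervalIntegral.norm_intervalIntegral_eq]
    refine le_trans (ENNReal.ofReal_le_ofReal (norm_integral_le_lintegral_norm _)) ?_
    exact ENNReal.ofReal_toReal_le
  calc ∫⁻ ξ : ℝ, ENNReal.ofReal ‖iteratedDeriv j (F s) ξ - iteratedDeriv j (F τc) ξ‖
      ≤ ∫⁻ ξ : ℝ, ∫⁻ φ in Set.uIoc τc s,
          ENNReal.ofReal ‖deriv (fun u => iteratedDeriv j (F u) ξ) φ‖ :=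
        lintegral_mono step1
    _ = ∫⁻ φ in Set.uIoc τc s, ∫⁻ ξ : ℝ,
          ENNReal.ofReal ‖deriv (fun u => iteratedDeriv j (F u) ξ) φ‖ := by
        refine lintegral_lintegral_swap ?_
        exact ((hD.comp (continuous_snd.prodMk continuous_fst)).norm.measurable.ennreal_ofReal
          ).aemeasurable
    _ ≤ ∫⁻ _ in Set.uIoc τc s, ENNReal.ofReal B := by
        refine lintegral_mono fun φ => ?_
        rw [← ofReal_integral_eq_lintegral_ofReal (hInt φ).norm
          (Filter.Eventually.of_forall fun _ => norm_nonneg _)]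
        exact ENNReal.ofReal_le_ofReal (hB φ)
    _ = ENNReal.ofReal B * volume (Set.uIoc τc s) := by
        rw [lintegral_const, Measure.restrict_apply_univ]
    _ = ENNReal.ofReal (B * |s - τc|) := by
        rw [Set.uIoc, Real.volume_Ioc, max_sub_min_eq_abs, ← ENNReal.ofReal_mul hB0]

lemma aux_fourier (g : ℝ → ℂ) (hg : ContDiff ℝ ((4:ℕ∞):WithTop ℕ∞) g)
    (hgi : ∀ j : ℕ, j ≤ 4 → Integrable (iteratedDeriv j g)) (z : ℝ) :
    (1 + z^4) * ‖∫ ξ : ℝ, Complex.exp (Complex.I * z * ξ) * g ξ‖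
      ≤ (∫ ξ : ℝ, ‖g ξ‖) + ∫ ξ : ℝ, ‖iteratedDeriv 4 g ξ‖ := by
  have hπ : (π:ℝ) ≠ 0 := Real.pi_ne_zero
  set w : ℝ := -(z / (2 * π)) with hw
  have hker : ∀ f : ℝ → ℂ, FourierTransform.fourier f w
      = ∫ v : ℝ, Complex.exp (Complex.I * z * v) * f v := by
    intro f
    rw [Real.fourier_real_eq_integral_exp_smul]
    congr 1
    funext v
    rw [smul_eq_mul]
    congr 1
    have hr : -2 * π * v * w = z * v := by
      rw [hw]; field_simp
    rw [hr]; push_cast; ring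
  have hgi' : ∀ n : ℕ, (n:ℕ∞) ≤ (4:ℕ∞) → Integrable (iteratedDeriv n g) :=
    fun n hn => hgi n (by exact_mod_cast hn)
  have hiter := Real.fourier_iteratedDeriv (N := (4:ℕ∞)) (n := 4) hg hgi' le_rfl
  have hc : (2*(π:ℂ)*Complex.I*(w:ℂ))^4 = (z:ℂ)^4 := by
    have hπc : (π:ℂ) ≠ 0 := Complex.ofReal_ne_zero.mpr hπ
    have h1 : (2*(π:ℂ)*Complex.I*(w:ℂ)) = Complex.I * (-(z:ℂ)) := by
      rw [hw]; push_cast; field_simp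
    have hI : (Complex.I)^4 = 1 := by
      rw [show (4:ℕ) = 2*2 from rfl, pow_mul, Complex.I_sq]; norm_num
    rw [h1, mul_pow, hI, one_mul]; ring
  have key : (((1:ℝ) + z^4 : ℝ):ℂ) * FourierTransform.fourier g w
      = FourierTransform.fourier g w + FourierTransform.fourier (iteratedDeriv 4 g) w := by
    rw [hiter]
    simp only [smul_eq_mul]
    rw [hc]
    push_cast
    ring
  have hexp : ∀ (v : ℝ) (c : ℂ), ‖Complex.exp (Complex.I * z * v) * c‖ = ‖c‖ := by
    intro v c
    rw [norm_mul, Complex.norm_exp]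
    simp
  have hbound : ∀ f : ℝ → ℂ, Integrable f →
      ‖FourierTransform.fourier f w‖ ≤ ∫ v : ℝ, ‖f v‖ := by
    intro f hf
    rw [hker f]
    refine norm_integral_le_of_norm_le hf.norm (Filter.Eventually.of_forall fun v => ?_)
    rw [hexp]
  have h1z : (0:ℝ) < 1 + z^4 := by positivity
  calc (1 + z^4) * ‖∫ ξ : ℝ, Complex.exp (Complex.I * z * ξ) * g ξ‖
      = ‖(((1:ℝ) + z^4 : ℝ):ℂ) * FourierTransform.fourier g w‖ := by
        rw [norm_mul, hker g, Complex.norm_real, Real.norm_eq_abs, abs_of_pos h1z]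
    _ = ‖FourierTransform.fourier g w + FourierTransform.fourier (iteratedDeriv 4 g) w‖ := by rw [key]
    _ ≤ ‖FourierTransform.fourier g w‖ + ‖FourierTransform.fourier (iteratedDeriv 4 g) w‖ :=
        norm_add_le _ _
    _ ≤ (∫ ξ : ℝ, ‖g ξ‖) + ∫ ξ : ℝ, ‖iteratedDeriv 4 g ξ‖ :=
        add_le_add (hbound g (hgi 0 (by norm_num))) (hbound _ (hgi 4 le_rfl))

theorem stmt11 (F : ℝ → ℝ → ℂ) (a K t τc ξc : ℝ)
    (ha : 0 < a) (hK : 0 < K) (hτc : 0 < τc) (ht : τc < t)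
    (hsm : ContDiff ℝ (⊤ : ℕ∞) (fun p : ℝ × ℝ => F p.1 p.2))
    (hSch : ∀ s : ℝ, ∀ j : ℕ, j ≤ 4 → Integrable (fun ξ => iteratedDeriv j (F s) ξ))
    (B : ℝ)
    (hB : ∀ j : ℕ, j ≤ 4 → ∀ φ : ℝ,
      (∫ ξ : ℝ, ‖deriv (fun s : ℝ => iteratedDeriv j (F s) ξ) φ‖) ≤ B)
    (hInt : ∀ j : ℕ, j ≤ 4 → ∀ φ : ℝ,
      Integrable (fun ξ : ℝ => deriv (fun s : ℝ => iteratedDeriv j (F s) ξ) φ)) :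
    ∃ C > 0, ∀ ε : ℝ, 0 < ε →
      ‖∫ z in Set.Icc (-(a / ε)) (K * (t - τc) / ε),
          Complex.exp (-Complex.I * ξc * z) *
            ∫ ξ : ℝ, Complex.exp (Complex.I * z * ξ) *
              (F (τc + ε * z / K) ξ - F τc ξ)‖
        ≤ C * ε := by
  have hB0 : 0 ≤ B :=
    le_trans (integral_nonneg fun _ => norm_nonneg _) (hB 0 (by norm_num) 0)
  have hden : ∀ z : ℝ, (0:ℝ) < 1 + z^4 := fun z => by positivity
  -- the weight |z|/(1+z^4) is integrable
  have hwcont : Continuous fun z : ℝ => |z| / (1 + z^4) :=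
    continuous_abs.div (by continuity) (fun z => (hden z).ne')
  have hCzInt : Integrable (fun z : ℝ => |z| / (1 + z^4)) := by
    refine ((integrable_inv_one_add_sq).const_mul 2).mono
      hwcont.aestronglyMeasurable (Filter.Eventually.of_forall fun z => ?_)
    have h2 : (0:ℝ) < 1 + z^2 := by positivity
    have hz : |z| * (1 + z^2) ≤ 2 * (1 + z^4) := by
      have ht0 : 0 ≤ |z| := abs_nonneg z
      have h1 : |z|^2 = z^2 := sq_abs z
      have h2' : |z|^4 = z^4 := by
        rw [show (4:ℕ) = 2*2 from rfl, pow_mul, pow_mul, h1]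
      nlinarith [sq_nonneg (|z| - 1), sq_nonneg (|z|^2 - 1), sq_nonneg (|z|^2 - |z|),
        mul_nonneg ht0 ht0]
    rw [Real.norm_eq_abs, Real.norm_eq_abs, abs_of_nonneg
      (div_nonneg (abs_nonneg z) (hden z).le),
      abs_of_nonneg (by positivity : (0:ℝ) ≤ 2 * (1 + z^2)⁻¹)]
    rw [div_le_iff₀ (hden z)]
    rw [mul_comm (2:ℝ) _, inv_mul_eq_div, div_mul_eq_mul_div, le_div_iff₀ h2]
    linarith [hz]
  set Cz : ℝ := ∫ z : ℝ, |z| / (1 + z^4) with hCzdef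
  have hCz0 : 0 ≤ Cz :=
    integral_nonneg fun z => div_nonneg (abs_nonneg z) (hden z).le
  refine ⟨2 * B / K * Cz + 1, by positivity, fun ε hε => ?_⟩
  -- pointwise bound on the inner integral
  have hFssm : ∀ s : ℝ, ContDiff ℝ (⊤ : ℕ∞) (F s) := fun s =>
    hsm.comp ((contDiff_const (c := s)).prodMk contDiff_id)
  have hsub : ∀ (s : ℝ) (j : ℕ), j ≤ 4 → ∀ ξ : ℝ,
      iteratedDeriv j (fun ξ => F s ξ - F τc ξ) ξ
      = iteratedDeriv j (F s) ξ - iteratedDeriv j (F τc) ξ := by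
    intro s j _ ξ
    have he : (fun ξ => F s ξ - F τc ξ) = F s - F τc := rfl
    rw [he, ← iteratedDerivWithin_univ, ← iteratedDerivWithin_univ, ← iteratedDerivWithin_univ,
      iteratedDerivWithin_sub (Set.mem_univ ξ) uniqueDiffOn_univ
        ((hFssm s).contDiffWithinAt.of_le (by exact_mod_cast le_top)) ((hFssm τc).contDiffWithinAt.of_le (by exact_mod_cast le_top))]
  have hptwise : ∀ z : ℝ,
      ‖∫ ξ : ℝ, Complex.exp (Complex.I * z * ξ) * (F (τc + ε * z / K) ξ - F τc ξ)‖
        ≤ (2 * B * (ε / K)) * (|z| / (1 + z^4)) := by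
    intro z
    set s : ℝ := τc + ε * z / K with hsdef
    have hgsm : ContDiff ℝ ((4:ℕ∞):WithTop ℕ∞) (fun ξ => F s ξ - F τc ξ) :=
      ((hFssm s).sub (hFssm τc)).of_le (by exact_mod_cast le_top)
    have hgint : ∀ j : ℕ, j ≤ 4 → Integrable (iteratedDeriv j (fun ξ => F s ξ - F τc ξ)) := by
      intro j hj
      have he : iteratedDeriv j (fun ξ => F s ξ - F τc ξ)
          = fun ξ => iteratedDeriv j (F s) ξ - iteratedDeriv j (F τc) ξ :=
        funext (hsub s j hj)
      rw [he]
      exact (hSch s j hj).sub (hSch τc j hj)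
    have h4 := aux_fourier _ hgsm hgint z
    have e0 : (∫ ξ : ℝ, ‖F s ξ - F τc ξ‖) ≤ B * |s - τc| := by
      have := aux_L1 F hsm B 0 τc s (hB 0 (by norm_num)) (hInt 0 (by norm_num))
      simpa [iteratedDeriv_zero] using this
    have e4 : (∫ ξ : ℝ, ‖iteratedDeriv 4 (fun ξ => F s ξ - F τc ξ) ξ‖) ≤ B * |s - τc| := by
      have he : (fun ξ : ℝ => ‖iteratedDeriv 4 (fun ξ => F s ξ - F τc ξ) ξ‖)
          = fun ξ : ℝ => ‖iteratedDeriv 4 (F s) ξ - iteratedDeriv 4 (F τc) ξ‖ := by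
        funext ξ; rw [hsub s 4 le_rfl ξ]
      rw [he]
      exact aux_L1 F hsm B 4 τc s (hB 4 le_rfl) (hInt 4 le_rfl)
    have habs : |s - τc| = ε * |z| / K := by
      rw [hsdef, add_sub_cancel_left, abs_div, abs_mul, abs_of_pos hε, abs_of_pos hK]
    have hkey : (1 + z^4) * ‖∫ ξ : ℝ, Complex.exp (Complex.I * z * ξ)
        * (F s ξ - F τc ξ)‖ ≤ 2 * B * (ε / K) * |z| := by
      calc (1 + z^4) * ‖∫ ξ : ℝ, Complex.exp (Complex.I * z * ξ) * (F s ξ - F τc ξ)‖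
          ≤ (∫ ξ : ℝ, ‖F s ξ - F τc ξ‖)
            + ∫ ξ : ℝ, ‖iteratedDeriv 4 (fun ξ => F s ξ - F τc ξ) ξ‖ := h4
        _ ≤ B * |s - τc| + B * |s - τc| := add_le_add e0 e4
        _ = 2 * B * (ε / K) * |z| := by rw [habs]; field_simp; ring
    rw [show (2 * B * (ε / K)) * (|z| / (1 + z^4))
        = (2 * B * (ε / K) * |z|) / (1 + z^4) from by ring, le_div_iff₀ (hden z)]
    calc ‖∫ ξ : ℝ, Complex.exp (Complex.I * z * ξ) * (F s ξ - F τc ξ)‖ * (1 + z^4)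
        = (1 + z^4) * ‖∫ ξ : ℝ, Complex.exp (Complex.I * z * ξ) * (F s ξ - F τc ξ)‖ := by ring
      _ ≤ 2 * B * (ε / K) * |z| := hkey
  -- assemble
  have hexp1 : ∀ z : ℝ, ‖Complex.exp (-Complex.I * ξc * z)‖ = 1 := by
    intro z
    rw [Complex.norm_exp]
    simp
  have hbnd : Integrable (fun z : ℝ => (2 * B * (ε / K)) * (|z| / (1 + z^4))) :=
    hCzInt.const_mul _
  have hc0 : (0:ℝ) ≤ 2 * B * (ε / K) := by positivity
  calc ‖∫ z in Set.Icc (-(a / ε)) (K * (t - τc) / ε),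
          Complex.exp (-Complex.I * ξc * z) *
            ∫ ξ : ℝ, Complex.exp (Complex.I * z * ξ) * (F (τc + ε * z / K) ξ - F τc ξ)‖
      ≤ ∫ z in Set.Icc (-(a / ε)) (K * (t - τc) / ε),
          (2 * B * (ε / K)) * (|z| / (1 + z^4)) := by
        refine norm_integral_le_of_norm_le hbnd.restrict
          (Filter.Eventually.of_forall fun z => ?_)
        rw [norm_mul, hexp1 z, one_mul]
        exact hptwise z
    _ ≤ ∫ z : ℝ, (2 * B * (ε / K)) * (|z| / (1 + z^4)) := by
        refine setIntegral_le_integral hbnd (Filter.Eventually.of_forall fun z => ?_)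
        exact mul_nonneg hc0 (div_nonneg (abs_nonneg z) (hden z).le)
    _ = (2 * B * (ε / K)) * Cz := by rw [integral_const_mul]
    _ ≤ (2 * B / K * Cz + 1) * ε := by
        have h1 : 2 * B * (ε / K) * Cz = (2 * B / K * Cz) * ε := by ring
        rw [h1]
        nlinarith [hε]
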